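/- Let f ∈ F_L, δ > 0, and let X_δ be the (unique, global, C²) solution of the smoothed ODE Ẍ_δ + (3/max(δ,t))Ẋ_δ + ∇f(X_δ) = 0 with X_δ(0) = x₀, Ẋ_δ(0) = 0. Define M_δ(t) = sup_{u ∈ (0,t]} ‖Ẋ_δ(u)‖/u. Then for every δ < √(6/L), M_δ(δ) ≤ ‖∇f(x₀)‖ / (1 − Lδ²/6). -/

import Mathlib

open Set Filter Topology

noncomputable section

abbrev E (n : ℕ) := EuclideanSpace ℝ (Fin n)

def MemFL (n : ℕ) (L : ℝ) (f : E n → ℝ) : Prop :=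
  ConvexOn ℝ Set.univ f ∧ ContDiff ℝ 1 f ∧
    ∀ x y, ‖gradient f x - gradient f y‖ ≤ L * ‖x - y‖

/-- The solution `X` (with velocity `V = Ẋ`) of the smoothed ODE
`Ẍ + (3/max(δ,t))Ẋ + ∇f(X) = 0`, `X(0) = x₀`, `Ẋ(0) = 0`, on `[0,∞)`. -/
def SmoothedSol (n : ℕ) (f : E n → ℝ) (δ : ℝ) (x0 : E n) (X V : ℝ → E n) : Prop :=
  X 0 = x0 ∧ V 0 = 0 ∧
  (∀ t ∈ Set.Ici (0:ℝ), HasDerivWithinAt X (V t) (Set.Ici 0) t) ∧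
  (∀ t ∈ Set.Ici (0:ℝ),
    HasDerivWithinAt V (-(3 / max δ t) • V t - gradient f (X t)) (Set.Ici 0) t)

/-!
On `[0, δ]` the damping coefficient is the constant `3/δ`, so the integrating factor `e^{3t/δ}`
shows that the damping can only shrink the velocity: `‖Ẋ(t)‖ ≤ b(t)` for any nonnegative `b`
with `b' ≥ ‖∇f(X)‖`. With `b(t) = K t`, `K` a bound for `‖∇f(X)‖` on `[0, δ]`, this makes
`M = M_δ(δ)` a genuine (finite) supremum, and then `‖Ẋ(u)‖ ≤ M u`, hence
`‖X(s) - x₀‖ ≤ M s²/2` and `‖∇f(X(s))‖ ≤ ‖∇f(x₀)‖ + L M s²/2`; taking `b(t) = ‖∇f(x₀)‖ t + L M t³/6`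
gives `M ≤ ‖∇f(x₀)‖ + (Lδ²/6) M`, which rearranges to the claim since `Lδ²/6 < 1`.
-/

section Comparison

variable {F : Type*} [NormedAddCommGroup F] [NormedSpace ℝ F]

theorem image_norm_le_of_damped_deriv_boundary {V w : ℝ → F} {b b' : ℝ → ℝ} {c a T : ℝ}
    (hc : 0 ≤ c) (hV : ContinuousOn V (Icc a T))
    (hV' : ∀ s ∈ Ico a T, HasDerivWithinAt V (-c • V s + w s) (Ici s) s)
    (ha : ‖V a‖ ≤ b a) (hb : ∀ s, HasDerivAt b (b' s) s) (hb0 : ∀ s ∈ Ico a T, 0 ≤ b s)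
    (hw : ∀ s ∈ Ico a T, ‖w s‖ ≤ b' s) :
    ∀ ⦃t⦄, t ∈ Icc a T → ‖V t‖ ≤ b t := by
  have hexp (s : ℝ) : HasDerivAt (fun s => Real.exp (c * s)) (Real.exp (c * s) * c) s := by
    simpa using ((hasDerivAt_id s).const_mul c).exp
  have hW : ∀ s ∈ Ico a T, HasDerivWithinAt (fun s => Real.exp (c * s) • V s)
      (Real.exp (c * s) • w s) (Ici s) s := by
    intro s hs
    refine ((hexp s).hasDerivWithinAt.smul (hV' s hs)).congr_deriv ?_
    module
  have hB (s : ℝ) : HasDerivAt (fun s => Real.exp (c * s) * b s)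
      (Real.exp (c * s) * c * b s + Real.exp (c * s) * b' s) s :=
    (hexp s).mul (hb s)
  have hWB := image_norm_le_of_norm_deriv_right_le_deriv_boundary
    ((by fun_prop : Continuous fun s => Real.exp (c * s)).continuousOn.fun_smul hV) hW
    (by simpa [norm_smul] using mul_le_mul_of_nonneg_left ha (Real.exp_pos (c * a)).le) hB
    (fun s hs => by
      have := mul_nonneg (mul_nonneg (Real.exp_pos (c * s)).le hc) (hb0 s hs)
      rw [norm_smul, Real.norm_of_nonneg (Real.exp_pos _).le]
      nlinarith [mul_le_mul_of_nonneg_left (hw s hs) (Real.exp_pos (c * s)).le])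
  intro t ht
  have := hWB ht
  rw [norm_smul, Real.norm_of_nonneg (Real.exp_pos _).le] at this
  exact le_of_mul_le_mul_left this (Real.exp_pos _)

theorem norm_image_sub_le_of_norm_deriv_right_le_mul {X V : ℝ → F} {M a T : ℝ}
    (hX : ContinuousOn X (Icc a T)) (hX' : ∀ s ∈ Ico a T, HasDerivWithinAt X (V s) (Ici s) s)
    (hV : ∀ s ∈ Ico a T, ‖V s‖ ≤ M * (s - a)) :
    ∀ ⦃t⦄, t ∈ Icc a T → ‖X t - X a‖ ≤ M * (t - a) ^ 2 / 2 :=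
  image_norm_le_of_norm_deriv_right_le_deriv_boundary (B' := fun s => M * (s - a))
    (hX.sub continuousOn_const) (fun s hs => (hX' s hs).sub_const (X a)) (by simp)
    (fun s => ((((hasDerivAt_id s).sub_const a).fun_pow 2).const_mul M).div_const 2
      |>.congr_deriv (by simp; ring))
    hV

end Comparison

theorem MemFL.continuous_gradient {n : ℕ} {L : ℝ} {f : E n → ℝ} (hf : MemFL n L f) :
    Continuous (gradient f) :=
  (InnerProductSpace.toDual ℝ (E n)).symm.continuous.comp (hf.2.1.continuous_fderiv one_ne_zero)

namespace SmoothedSol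

variable {n : ℕ} {f : E n → ℝ} {δ : ℝ} {x0 : E n} {X V : ℝ → E n}

theorem continuousOn_position (h : SmoothedSol n f δ x0 X V) : ContinuousOn X (Ici 0) :=
  fun t ht => (h.2.2.1 t ht).continuousWithinAt

theorem continuousOn_velocity (h : SmoothedSol n f δ x0 X V) : ContinuousOn V (Ici 0) :=
  fun t ht => (h.2.2.2 t ht).continuousWithinAt

theorem hasDerivWithinAt_position (h : SmoothedSol n f δ x0 X V) {s : ℝ} (hs : 0 ≤ s) :
    HasDerivWithinAt X (V s) (Ici s) s :=
  (h.2.2.1 s hs).mono (Ici_subset_Ici.2 hs)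

theorem hasDerivWithinAt_velocity (h : SmoothedSol n f δ x0 X V) {s : ℝ} (hs : s ∈ Icc 0 δ) :
    HasDerivWithinAt V (-(3 / δ) • V s + -gradient f (X s)) (Ici s) s := by
  have hV := (h.2.2.2 s hs.1).mono (Ici_subset_Ici.2 hs.1)
  rwa [max_eq_left hs.2, sub_eq_add_neg] at hV

theorem norm_velocity_le (h : SmoothedSol n f δ x0 X V) {b b' : ℝ → ℝ}
    (hb : ∀ s, HasDerivAt b (b' s) s) (hb0 : ∀ s ∈ Icc 0 δ, 0 ≤ b s)
    (hgrad : ∀ s ∈ Ico 0 δ, ‖gradient f (X s)‖ ≤ b' s) :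
    ∀ t ∈ Icc 0 δ, ‖V t‖ ≤ b t := by
  intro t ht
  have hδ : 0 ≤ δ := ht.1.trans ht.2
  refine image_norm_le_of_damped_deriv_boundary (div_nonneg zero_le_three hδ)
    (h.continuousOn_velocity.mono Icc_subset_Ici_self)
    (fun s hs => h.hasDerivWithinAt_velocity (Ico_subset_Icc_self hs))
    ?_ hb (fun s hs => hb0 s (Ico_subset_Icc_self hs)) (fun s hs => by simpa using hgrad s hs) ht
  simpa [h.2.1] using hb0 0 ⟨le_rfl, hδ⟩

theorem bddAbove_norm_velocity_div (h : SmoothedSol n f δ x0 X V)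
    (hf : Continuous (gradient f)) : BddAbove ((fun u => ‖V u‖ / u) '' Ioc 0 δ) := by
  obtain ⟨K, hK⟩ := (isCompact_Icc (a := 0) (b := δ)).exists_bound_of_continuousOn
    (hf.comp_continuousOn (h.continuousOn_position.mono Icc_subset_Ici_self))
  refine ⟨K, ?_⟩
  rintro _ ⟨u, hu, rfl⟩
  have hK0 : 0 ≤ K := (norm_nonneg _).trans (hK u (Ioc_subset_Icc_self hu))
  rw [div_le_iff₀ hu.1]
  exact h.norm_velocity_le (b := fun s => K * s)
    (fun s => by simpa using (hasDerivAt_id s).const_mul K) (fun s hs => mul_nonneg hK0 hs.1)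
    (fun s hs => hK s (Ico_subset_Icc_self hs)) u (Ioc_subset_Icc_self hu)

theorem norm_velocity_le_of_norm_velocity_le_mul (h : SmoothedSol n f δ x0 X V) {L M : ℝ}
    (hL : 0 ≤ L) (hLip : ∀ x y, ‖gradient f x - gradient f y‖ ≤ L * ‖x - y‖)
    (hVM : ∀ u ∈ Icc 0 δ, ‖V u‖ ≤ M * u) :
    ∀ t ∈ Icc 0 δ, ‖V t‖ ≤ ‖gradient f x0‖ * t + L * M * t ^ 3 / 6 := by
  have hX : ∀ s ∈ Icc 0 δ, ‖X s - x0‖ ≤ M * s ^ 2 / 2 := fun s hs => by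
    simpa [h.1] using norm_image_sub_le_of_norm_deriv_right_le_mul
      (h.continuousOn_position.mono Icc_subset_Ici_self)
      (fun u hu => h.hasDerivWithinAt_position hu.1)
      (fun u hu => by simpa using hVM u (Ico_subset_Icc_self hu)) hs
  refine h.norm_velocity_le (b := fun s => ‖gradient f x0‖ * s + L * M * s ^ 3 / 6)
    (b' := fun s => ‖gradient f x0‖ + L * (M * s ^ 2 / 2))
    (fun s => ?_) (fun s hs => ?_) (fun s hs => ?_)
  · exact ((hasDerivAt_id s).const_mul ‖gradient f x0‖).add
      ((((hasDerivAt_id s).fun_pow 3).const_mul (L * M)).div_const 6) |>.congr_deriv (by simp; ring)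
  · have hMs : 0 ≤ M * s := (norm_nonneg _).trans (hVM s hs)
    have : 0 ≤ L * (M * s) * s ^ 2 / 6 := by have := hs.1; positivity
    nlinarith [norm_nonneg (gradient f x0), hs.1]
  · calc ‖gradient f (X s)‖ ≤ ‖gradient f x0‖ + ‖gradient f (X s) - gradient f x0‖ :=
          norm_le_norm_add_norm_sub' _ _
      _ ≤ ‖gradient f x0‖ + L * ‖X s - x0‖ := by gcongr; exact hLip _ _
      _ ≤ ‖gradient f x0‖ + L * (M * s ^ 2 / 2) := by
          gcongr; exact hX s (Ico_subset_Icc_self hs)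

end SmoothedSol

theorem smoothed_ode_M_at_delta_general (n : ℕ) (L : ℝ)
    (f : E n → ℝ) (hf : MemFL n L f) (x0 : E n)
    (δ : ℝ) (hδ0 : 0 < δ) (hδ : δ < Real.sqrt (6 / L))
    (X V : ℝ → E n) (hXV : SmoothedSol n f δ x0 X V) :
    sSup ((fun u => ‖V u‖ / u) '' Set.Ioc (0:ℝ) δ) ≤
      ‖gradient f x0‖ / (1 - L * δ ^ 2 / 6) := by
  have hL : 0 < L := (div_pos_iff_of_pos_left (by norm_num)).1 (Real.sqrt_pos.1 (hδ0.trans hδ))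
  have hδL : L * δ ^ 2 / 6 < 1 := by
    have := (Real.lt_sqrt hδ0.le).1 hδ
    rw [lt_div_iff₀ hL] at this
    linarith
  set M := sSup ((fun u => ‖V u‖ / u) '' Ioc (0 : ℝ) δ)
  have hbdd := hXV.bddAbove_norm_velocity_div hf.continuous_gradient
  have hVM : ∀ u ∈ Icc 0 δ, ‖V u‖ ≤ M * u := by
    rintro u ⟨hu0, huδ⟩
    rcases hu0.eq_or_lt with rfl | hu
    · simp [hXV.2.1]
    · exact (div_le_iff₀ hu).1 (le_csSup hbdd ⟨u, ⟨hu, huδ⟩, rfl⟩)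
  have hV := hXV.norm_velocity_le_of_norm_velocity_le_mul hL.le hf.2.2 hVM
  have hM0 : 0 ≤ M :=
    nonneg_of_mul_nonneg_left ((norm_nonneg _).trans (hVM δ ⟨hδ0.le, le_rfl⟩)) hδ0
  have hMle : M ≤ ‖gradient f x0‖ + L * δ ^ 2 / 6 * M := by
    refine csSup_le ⟨_, ⟨δ, ⟨hδ0, le_rfl⟩, rfl⟩⟩ ?_
    rintro _ ⟨t, ht, rfl⟩
    rw [div_le_iff₀ ht.1]
    have htδ : t ^ 2 ≤ δ ^ 2 := pow_le_pow_left₀ ht.1.le ht.2 2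
    nlinarith [hV t (Ioc_subset_Icc_self ht),
      mul_le_mul_of_nonneg_left htδ (mul_nonneg (mul_nonneg hL.le hM0) ht.1.le)]
  rw [le_div_iff₀ (by linarith)]
  linarith

/-- **Lemma (bound on `M_δ(δ)`).** For `f ∈ F_L` and `δ < √(6/L)`, the solution of the
smoothed ODE satisfies `M_δ(δ) = sup_{u ∈ (0,δ]} ‖Ẋ_δ(u)‖/u ≤ ‖∇f(x₀)‖/(1 - Lδ²/6)`. -/
theorem smoothed_ode_M_at_delta (n : ℕ) (L : ℝ) (hL : 0 < L)
    (f : E n → ℝ) (hf : MemFL n L f) (x0 : E n)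
    (δ : ℝ) (hδ0 : 0 < δ) (hδ : δ < Real.sqrt (6 / L))
    (X V : ℝ → E n) (hXV : SmoothedSol n f δ x0 X V) :
    sSup ((fun u => ‖V u‖ / u) '' Set.Ioc (0:ℝ) δ) ≤
      ‖gradient f x0‖ / (1 - L * δ ^ 2 / 6) :=
  smoothed_ode_M_at_delta_general n L f hf x0 δ hδ0 hδ X V hXV
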